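/- Let S₁₁ and X be bounded operators on a complex Hilbert space H with ‖X‖ ≤ π, and suppose S is an operator with w(S) ≤ 1 (e.g., a contraction such as the unilateral shift). Then the numerical radius of the Foguel-type operator [[S*, X],[O, S]] on H ⊕ H is at most 3/2 + (1/2)√(1 + π²). -/

import Mathlib

/-!
Writing a unit vector of `H ⊕ H` as `(x₀, x₁)` with `a = ‖x₀‖`, `b = ‖x₁‖`, `a² + b² = 1`,
the upper-triangular block `[[A, B], [0, D]]` gives
`|⟪T x, x⟫| ≤ w(A) a² + ‖B‖ a b + w(D) b² ≤ max (w A) (w D) + ‖B‖ / 2`, since `2ab ≤ a² + b²`.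
With `A = S*`, `D = S` (and `w(S*) = w(S) ≤ 1`), `B = X` this is `1 + π / 2`,
which is below `3/2 + √(1 + π²)/2` because `π ≤ √(1 + π²)`.
-/

noncomputable def numRadius {E : Type*} [NormedAddCommGroup E] [InnerProductSpace ℂ E]
    (T : E →L[ℂ] E) : ℝ :=
  sSup {r : ℝ | ∃ x : E, ‖x‖ = 1 ∧ r = ‖(inner ℂ (T x) x : ℂ)‖}

noncomputable def blockOp {H : Type*} [NormedAddCommGroup H] [InnerProductSpace ℂ H]
    (n : ℕ) (M : Fin n → Fin n → H →L[ℂ] H) :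
    (PiLp 2 fun _ : Fin n => H) →L[ℂ] (PiLp 2 fun _ : Fin n => H) :=
  (PiLp.continuousLinearEquiv 2 ℂ (fun _ : Fin n => H)).symm.toContinuousLinearMap ∘L
    (ContinuousLinearMap.pi fun i => ∑ j, (M i j).comp (ContinuousLinearMap.proj j)) ∘L
    (PiLp.continuousLinearEquiv 2 ℂ (fun _ : Fin n => H)).toContinuousLinearMap

open ContinuousLinearMap

section NumRadius

variable {E : Type*} [NormedAddCommGroup E] [InnerProductSpace ℂ E]

lemma numRadius_nonneg (T : E →L[ℂ] E) : 0 ≤ numRadius T :=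
  Real.sSup_nonneg fun _ ⟨_, _, hr⟩ => hr ▸ norm_nonneg _

lemma numRadius_le {T : E →L[ℂ] E} {c : ℝ} (hc : 0 ≤ c)
    (h : ∀ x : E, ‖x‖ = 1 → ‖inner ℂ (T x) x‖ ≤ c) : numRadius T ≤ c :=
  Real.sSup_le (fun _ ⟨x, hx, hr⟩ => hr ▸ h x hx) hc

lemma norm_inner_le_numRadius (T : E →L[ℂ] E) {x : E} (hx : ‖x‖ = 1) :
    ‖inner ℂ (T x) x‖ ≤ numRadius T := by
  refine le_csSup ⟨‖T‖, ?_⟩ ⟨x, hx, rfl⟩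
  rintro _ ⟨y, hy, rfl⟩
  calc ‖inner ℂ (T y) y‖ ≤ ‖T y‖ * ‖y‖ := norm_inner_le_norm _ _
    _ ≤ ‖T‖ * ‖y‖ * ‖y‖ := by gcongr; exact T.le_opNorm y
    _ = ‖T‖ := by rw [hy, mul_one, mul_one]

lemma norm_inner_le_numRadius_mul_sq (T : E →L[ℂ] E) (x : E) :
    ‖inner ℂ (T x) x‖ ≤ numRadius T * ‖x‖ ^ 2 := by
  rcases eq_or_ne x 0 with rfl | hx
  · simp
  have hpos : 0 < ‖x‖ := norm_pos_iff.mpr hx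
  set u : E := (‖x‖⁻¹ : ℂ) • x
  have hu : ‖u‖ = 1 := by simp [u, norm_smul, hpos.ne']
  have hscale : ‖inner ℂ (T x) x‖ = ‖x‖ ^ 2 * ‖inner ℂ (T u) u‖ := by
    simp only [u, map_smul, inner_smul_left, inner_smul_right, norm_mul, RCLike.norm_conj,
      norm_inv, Complex.norm_real, Real.norm_eq_abs, abs_of_pos hpos]
    field_simp
  rw [hscale, mul_comm]
  exact mul_le_mul_of_nonneg_right (norm_inner_le_numRadius T hu) (sq_nonneg _)

lemma numRadius_adjoint [CompleteSpace E] (T : E →L[ℂ] E) :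
    numRadius (adjoint T) = numRadius T := by
  have h (x : E) : ‖inner ℂ (adjoint T x) x‖ = ‖inner ℂ (T x) x‖ := by
    rw [adjoint_inner_left, ← inner_conj_symm, RCLike.norm_conj]
  simp only [numRadius, h]

end NumRadius

section BlockOp

variable {H : Type*} [NormedAddCommGroup H] [InnerProductSpace ℂ H]

lemma blockOp_apply {n : ℕ} (M : Fin n → Fin n → H →L[ℂ] H) (x : PiLp 2 fun _ : Fin n => H)
    (i : Fin n) : blockOp n M x i = ∑ j, M i j (x j) := by
  simp [blockOp, sum_apply]

lemma inner_blockOp_upperTriangular (A B D : H →L[ℂ] H) (x : PiLp 2 fun _ : Fin 2 => H) :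
    inner ℂ (blockOp 2 !![A, B; 0, D] x) x =
      inner ℂ (A (x 0)) (x 0) + inner ℂ (B (x 1)) (x 0) + inner ℂ (D (x 1)) (x 1) := by
  have h (i : Fin 2) := blockOp_apply (!![A, B; 0, D] : Fin 2 → Fin 2 → H →L[ℂ] H) x i
  simp only [Fin.sum_univ_two] at h
  simp [PiLp.inner_apply, Fin.sum_univ_two, h, inner_add_left]

lemma numRadius_blockOp_upperTriangular_le (A B D : H →L[ℂ] H) :
    numRadius (blockOp 2 !![A, B; 0, D]) ≤ max (numRadius A) (numRadius D) + ‖B‖ / 2 := by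
  have hmax_nonneg := (numRadius_nonneg A).trans (le_max_left _ (numRadius D))
  refine numRadius_le (add_nonneg hmax_nonneg (by positivity)) fun x hx => ?_
  set a := ‖x 0‖
  set b := ‖x 1‖
  have hab : a ^ 2 + b ^ 2 = 1 := by
    simpa [Fin.sum_univ_two, hx] using (PiLp.norm_sq_eq_of_L2 (fun _ : Fin 2 => H) x).symm
  have hB : ‖inner ℂ (B (x 1)) (x 0)‖ ≤ ‖B‖ * (a * b) :=
    calc ‖inner ℂ (B (x 1)) (x 0)‖ ≤ ‖B (x 1)‖ * a := norm_inner_le_norm _ _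
      _ ≤ ‖B‖ * b * a := by gcongr; exact B.le_opNorm _
      _ = ‖B‖ * (a * b) := by ring
  have hA := norm_inner_le_numRadius_mul_sq A (x 0)
  have hD := norm_inner_le_numRadius_mul_sq D (x 1)
  rw [inner_blockOp_upperTriangular]
  calc _ ≤ numRadius A * a ^ 2 + ‖B‖ * (a * b) + numRadius D * b ^ 2 :=
        (norm_add₃_le).trans (by gcongr)
    _ ≤ max (numRadius A) (numRadius D) * (a ^ 2 + b ^ 2) + ‖B‖ * ((a ^ 2 + b ^ 2) / 2) := by
        have hmaxA := le_max_left (numRadius A) (numRadius D)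
        have hmaxD := le_max_right (numRadius A) (numRadius D)
        have hamgm : a * b ≤ (a ^ 2 + b ^ 2) / 2 := by nlinarith [two_mul_le_add_sq a b]
        nlinarith [sq_nonneg a, sq_nonneg b, norm_nonneg B]
    _ = _ := by rw [hab]; ring

end BlockOp

lemma one_add_pi_div_two_le : 1 + Real.pi / 2 ≤ 3 / 2 + (1 / 2) * Real.sqrt (1 + Real.pi ^ 2) := by
  have : Real.pi ≤ Real.sqrt (1 + Real.pi ^ 2) := Real.le_sqrt_of_sq_le (by linarith)
  linarith

variable {H : Type*} [NormedAddCommGroup H] [InnerProductSpace ℂ H]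
theorem stmt19 [CompleteSpace H] (S X : H →L[ℂ] H)
    (hS : numRadius S ≤ 1) (hX : ‖X‖ ≤ Real.pi) :
    numRadius (blockOp 2 !![ContinuousLinearMap.adjoint S, X; 0, S]) ≤
      3 / 2 + (1 / 2) * Real.sqrt (1 + Real.pi ^ 2) :=
  calc _ ≤ max (numRadius (adjoint S)) (numRadius S) + ‖X‖ / 2 :=
        numRadius_blockOp_upperTriangular_le _ _ _
    _ ≤ 1 + Real.pi / 2 := by rw [numRadius_adjoint, max_self]; linarith
    _ ≤ _ := one_add_pi_div_two_le
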